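/- arXiv:2506.11660 — 4 statements merged into one kernel-verified Lean document; each statement's English description precedes it below -/
import Mathlib

section
/- If a student i is unassigned under DA (i.e., DA_i(P) is the null school s_∅), then i is unimprovable: every stable-dominating matching ν satisfies ν(i) = s_∅. -/
/-!
A school choice problem: finitely many students `I` and schools `S`
(with a distinguished null school of quota `|I|`).  Each student `i` has a
strict preference over schools represented by its rank function
`rk i : S → ℕ` (a bijection onto `{1, …, |S|}`, where rank 1 is the most
preferred school); each school `s` has a quota `quota s ≥ 1` and a strict
priority over students represented by `prio s : I → ℕ`
(`i ▷_s j` iff `prio s i < prio s j`).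
-/
structure SchoolChoice (I S : Type) [Fintype I] [Fintype S]
    [DecidableEq I] [DecidableEq S] where
  nullSchool : S
  quota : S → ℕ
  rk : I → S → ℕ
  prio : S → I → ℕ
  quota_pos : ∀ s : S, 1 ≤ quota s
  quota_null : quota nullSchool = Fintype.card I
  rk_inj : ∀ i : I, Function.Injective (rk i)
  rk_mem : ∀ (i : I) (s : S), rk i s ∈ Finset.Icc 1 (Fintype.card S)
  prio_inj : ∀ s : S, Function.Injective (prio s)

namespace SchoolChoice

open scoped Classical

variable {I S : Type} [Fintype I] [Fintype S] [DecidableEq I] [DecidableEq S]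

/-- `μ` is a matching: no school is assigned more students than its quota. -/
def IsMatching (P : SchoolChoice I S) (μ : I → S) : Prop :=
  ∀ s : S, (Finset.univ.filter fun i => μ i = s).card ≤ P.quota s

/-- Given the sets `R i` of schools that have rejected student `i` so far,
student `i` proposes to her most preferred school that has not rejected her. -/
noncomputable def propose (P : SchoolChoice I S) (R : I → Finset S) (i : I) : S :=
  if h : (Finset.univ \ R i).Nonempty then
    (Finset.exists_min_image (Finset.univ \ R i) (P.rk i) h).choose
  else P.nullSchool

/-- At the DA round with rejection state `R`, school `s` rejects student `i`:
`i` applies to `s` and at least `quota s` applicants to `s` have higher priority. -/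
def rejectsAt (P : SchoolChoice I S) (R : I → Finset S) (s : S) (i : I) : Prop :=
  P.propose R i = s ∧
    P.quota s ≤ (Finset.univ.filter fun j =>
      P.propose R j = s ∧ P.prio s j < P.prio s i).card

/-- One round of student-proposing Deferred Acceptance: record new rejections. -/
noncomputable def stepR (P : SchoolChoice I S) (R : I → Finset S) : I → Finset S :=
  fun i => R i ∪ (Finset.univ.filter fun s => P.rejectsAt R s i)

/-- Rejection state after `n` rounds of Deferred Acceptance. -/
noncomputable def daR (P : SchoolChoice I S) : ℕ → I → Finset S
  | 0 => fun _ => (∅ : Finset S)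
  | n + 1 => P.stepR (P.daR n)

/-- The outcome of the student-proposing Deferred Acceptance algorithm:
iterate rounds until no rejection occurs (which happens within
`|I|·|S| + 1` rounds); each student is matched to the school holding her. -/
noncomputable def DA (P : SchoolChoice I S) : I → S :=
  P.propose (P.daR (Fintype.card I * Fintype.card S + 1))

/-- A matching `ν` is stable-dominating if every student weakly prefers
`ν` to the DA outcome. -/
def StableDominating (P : SchoolChoice I S) (ν : I → S) : Prop :=
  P.IsMatching ν ∧ ∀ i : I, P.rk i (ν i) ≤ P.rk i (P.DA i)

/-- Student `i` is unimprovable: every stable-dominating matching assigns `i`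
to her DA school. -/
def Unimprovable (P : SchoolChoice I S) (i : I) : Prop :=
  ∀ ν : I → S, P.StableDominating ν → ν i = P.DA i

/-- Edge of the envy digraph `G^DA(P)`: `i` prefers `j`'s DA school to her own. -/
def Envy (P : SchoolChoice I S) (i j : I) : Prop :=
  P.rk i (P.DA j) < P.rk i (P.DA i)

/-- Student `i` lies on a directed cycle of the envy digraph `G^DA(P)`. -/
def OnCycle (P : SchoolChoice I S) (i : I) : Prop :=
  ∃ (m : ℕ) (c : ℕ → I), 0 < m ∧ c 0 = i ∧ c m = i ∧
    ∀ k < m, P.Envy (c k) (c (k + 1))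

/-- Student `i` desires school `s` in matching `μ`. -/
def Desires (P : SchoolChoice I S) (μ : I → S) (i : I) (s : S) : Prop :=
  P.rk i s < P.rk i (μ i)

/-- `μ` is non-wasteful: every desired school is filled to quota. -/
def NonWasteful (P : SchoolChoice I S) (μ : I → S) : Prop :=
  ∀ s : S, (∃ i : I, P.Desires μ i s) →
    (Finset.univ.filter fun i => μ i = s).card = P.quota s

/-- `μ` is stable: a non-wasteful matching with no priority violations. -/
def Stable (P : SchoolChoice I S) (μ : I → S) : Prop :=
  P.IsMatching μ ∧ P.NonWasteful μ ∧
    ¬ ∃ (i j : I) (s : S), P.Desires μ i s ∧ μ j = s ∧ P.prio s i < P.prio s j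

/-- `μ` Pareto-dominates `ν`. -/
def ParetoDominates (P : SchoolChoice I S) (μ ν : I → S) : Prop :=
  (∀ i : I, P.rk i (μ i) ≤ P.rk i (ν i)) ∧ ∃ i : I, P.rk i (μ i) < P.rk i (ν i)

/-- `μ` is a Pareto-efficient matching. -/
def ParetoEfficient (P : SchoolChoice I S) (μ : I → S) : Prop :=
  P.IsMatching μ ∧ ∀ ν : I → S, P.IsMatching ν → ¬ P.ParetoDominates ν μ

end SchoolChoice

namespace SchoolChoice

open Finset
open scoped Classical

variable {I S : Type} [Fintype I] [Fintype S] [DecidableEq I] [DecidableEq S]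

lemma propose_min (P : SchoolChoice I S) (R : I → Finset S) (i : I) (s : S)
    (hs : s ∉ R i) : P.rk i (P.propose R i) ≤ P.rk i s := by
  have hne : (Finset.univ \ R i).Nonempty := ⟨s, by simp [hs]⟩
  have hspec := (Finset.exists_min_image (Finset.univ \ R i) (P.rk i) hne).choose_spec
  rw [propose, dif_pos hne]
  exact hspec.2 s (by simp [hs])

lemma key_count {α : Type*} [DecidableEq α] (T : Finset α) (f : α → ℕ)
    (hf : Set.InjOn f T) (q : ℕ) (hq : q ≤ T.card) :
    q ≤ (T.filter fun j => (T.filter fun j' => f j' < f j).card < q).card := by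
  set B : α → ℕ := fun j => (T.filter fun j' => f j' < f j).card with hB
  have hmono : ∀ a ∈ T, ∀ b ∈ T, f a < f b → B a < B b := by
    intro a ha b hb hab
    apply Finset.card_lt_card
    constructor
    · intro x hx
      simp only [Finset.mem_filter] at hx ⊢
      exact ⟨hx.1, hx.2.trans hab⟩
    · intro hsub
      have hmem : a ∈ T.filter fun j' => f j' < f b := by
        simp only [Finset.mem_filter]; exact ⟨ha, hab⟩
      have := hsub hmem
      simp only [Finset.mem_filter] at this
      exact lt_irrefl _ this.2
  have hBinj : Set.InjOn B T := by
    intro a ha b hb hab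
    by_contra hne
    have hfne : f a ≠ f b := fun hh => hne (hf ha hb hh)
    rcases lt_or_gt_of_ne hfne with hlt | hlt
    · exact absurd hab (Nat.ne_of_lt (hmono a ha b hb hlt))
    · exact absurd hab.symm (Nat.ne_of_lt (hmono b hb a ha hlt))
  have hBlt : ∀ a ∈ T, B a < T.card := by
    intro a ha
    have hsub : (T.filter fun j' => f j' < f a) ⊆ T.erase a := by
      intro x hx
      simp only [Finset.mem_filter] at hx
      exact Finset.mem_erase.mpr ⟨fun hh => by subst hh; exact lt_irrefl _ hx.2, hx.1⟩
    calc B a ≤ (T.erase a).card := Finset.card_le_card hsub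
      _ < T.card := Finset.card_erase_lt_of_mem ha
  have himg : T.image B = Finset.range T.card := by
    apply Finset.eq_of_subset_of_card_le
    · intro x hx
      simp only [Finset.mem_image] at hx
      obtain ⟨a, ha, rfl⟩ := hx
      exact Finset.mem_range.mpr (hBlt a ha)
    · rw [Finset.card_range, Finset.card_image_of_injOn hBinj]
  have hfilt : (T.filter fun j => B j < q).image B
      = (Finset.range T.card).filter (· < q) := by
    rw [← himg, Finset.filter_image]
  have hrange : (Finset.range T.card).filter (· < q) = Finset.range q := by
    ext x
    simp only [Finset.mem_filter, Finset.mem_range]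
    constructor
    · rintro ⟨-, hx⟩; exact hx
    · intro hx; exact ⟨lt_of_lt_of_le hx hq, hx⟩
  have hcard : (T.filter fun j => B j < q).card = q := by
    have hsub : Set.InjOn B (T.filter fun j => B j < q) :=
      hBinj.mono (Finset.coe_subset.mpr (Finset.filter_subset _ _))
    rw [← Finset.card_image_of_injOn hsub, hfilt, hrange, Finset.card_range]
  exact hcard.ge

lemma applicants_persist (P : SchoolChoice I S) (R : I → Finset S) (s : S)
    (h : P.quota s ≤ (Finset.univ.filter fun j => P.propose R j = s).card) :
    P.quota s ≤ (Finset.univ.filter fun j => P.propose (P.stepR R) j = s).card := by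
  set T := Finset.univ.filter fun j => P.propose R j = s with hT
  have hinj : Set.InjOn (P.prio s) T := fun a _ b _ hab => P.prio_inj s hab
  have hkey := key_count T (P.prio s) hinj (P.quota s) h
  refine hkey.trans (Finset.card_le_card ?_)
  intro j hj
  simp only [hT, Finset.mem_filter, Finset.mem_univ, true_and] at hj
  obtain ⟨hjs, hcnt⟩ := hj
  have hnrej : ¬ P.rejectsAt R s j := by
    rintro ⟨-, hle⟩
    have heq : (Finset.univ.filter fun j' =>
        P.propose R j' = s ∧ P.prio s j' < P.prio s j)
        = T.filter fun j' => P.prio s j' < P.prio s j := by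
      rw [hT, Finset.filter_filter]
    rw [heq] at hle
    exact absurd hle (not_le.mpr hcnt)
  have hempty : (Finset.univ.filter fun s' => P.rejectsAt R s' j) = ∅ := by
    rw [Finset.filter_eq_empty_iff]
    intro s' _ hrej
    have : s' = s := hrej.1.symm.trans hjs
    exact hnrej (this ▸ hrej)
  have hReq : P.stepR R j = R j := by
    show R j ∪ _ = R j
    rw [hempty, Finset.union_empty]
  have hprop : P.propose (P.stepR R) j = P.propose R j := by
    simp only [propose, hReq]
  simp only [Finset.mem_filter, Finset.mem_univ, true_and]
  rw [hprop]; exact hjs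

lemma mem_daR_rejects (P : SchoolChoice I S) : ∀ (n : ℕ) (i : I) (s : S),
    s ∈ P.daR n i → ∃ m < n, P.rejectsAt (P.daR m) s i := by
  intro n
  induction n with
  | zero => intro i s hs; simp [daR] at hs
  | succ n ih =>
    intro i s hs
    have : P.daR (n + 1) = P.stepR (P.daR n) := rfl
    rw [this, stepR] at hs
    rcases Finset.mem_union.mp hs with hh | hh
    · obtain ⟨m, hm, hr⟩ := ih i s hh
      exact ⟨m, hm.trans (Nat.lt_succ_self n), hr⟩
    · exact ⟨n, Nat.lt_succ_self n, (Finset.mem_filter.mp hh).2⟩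

lemma full_after (P : SchoolChoice I S) (s : S) (m : ℕ)
    (h : P.quota s ≤ (Finset.univ.filter fun j => P.propose (P.daR m) j = s).card) :
    ∀ k, P.quota s ≤
      (Finset.univ.filter fun j => P.propose (P.daR (m + k)) j = s).card := by
  intro k
  induction k with
  | zero => simpa using h
  | succ k ih =>
    have heq : P.daR (m + (k + 1)) = P.stepR (P.daR (m + k)) := rfl
    rw [heq]
    exact P.applicants_persist _ s ih

lemma not_rejects_null (P : SchoolChoice I S) (R : I → Finset S) (i : I) :
    ¬ P.rejectsAt R P.nullSchool i := by
  rintro ⟨-, hle⟩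
  have hsub : (Finset.univ.filter fun j => P.propose R j = P.nullSchool ∧
      P.prio P.nullSchool j < P.prio P.nullSchool i) ⊆ Finset.univ.erase i := by
    intro x hx
    simp only [Finset.mem_filter] at hx
    refine Finset.mem_erase.mpr ⟨fun hh => ?_, Finset.mem_univ x⟩
    subst hh; exact lt_irrefl _ hx.2.2
  have hfin := hle.trans (Finset.card_le_card hsub)
  rw [Finset.card_erase_of_mem (Finset.mem_univ i), P.quota_null,
    Finset.card_univ] at hfin
  have hpos : 0 < Fintype.card I := Fintype.card_pos_iff.mpr ⟨i⟩
  omega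

lemma desired_mem (P : SchoolChoice I S) (n : ℕ) (j : I) (s : S)
    (hd : P.rk j s < P.rk j (P.propose (P.daR n) j)) : s ∈ P.daR n j := by
  by_contra hs
  exact absurd (P.propose_min (P.daR n) j s hs) (not_le.mpr hd)

end SchoolChoice

/-- If a student `i` is unassigned under DA (i.e. `DA_i(P)` is the
null school), then `i` is unimprovable: every stable-dominating matching `ν`
satisfies `ν i = s_∅`. -/
theorem unassigned_unimprovable {I S : Type} [Fintype I] [Fintype S]
    [DecidableEq I] [DecidableEq S] (P : SchoolChoice I S) (i : I)
    (h : P.DA i = P.nullSchool) :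
    ∀ ν : I → S, P.StableDominating ν → ν i = P.nullSchool := by
  classical
  intro ν hν
  by_contra hcon
  obtain ⟨hmatch, hdom⟩ := hν
  set N := Fintype.card I * Fintype.card S + 1 with hN
  have hDA : P.DA = P.propose (P.daR N) := rfl
  have hstrict : ∀ j : I, ν j ≠ P.DA j → P.rk j (ν j) < P.rk j (P.DA j) := by
    intro j hne
    exact lt_of_le_of_ne (hdom j) (fun hh => hne (P.rk_inj j hh))
  set A := Finset.univ.filter fun j => ν j ≠ P.DA j with hA
  have hiA : i ∈ A := by
    simp only [hA, Finset.mem_filter, Finset.mem_univ, true_and]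
    rw [h]; exact hcon
  -- every school with a mover-in is full under DA at quota
  have hle : ∀ s : S,
      (A.filter fun j => ν j = s).card ≤ (A.filter fun j => P.DA j = s).card := by
    intro s
    rcases Finset.eq_empty_or_nonempty (A.filter fun j => ν j = s) with he | ⟨j, hj⟩
    · simp [he]
    · simp only [hA, Finset.mem_filter, Finset.mem_univ, true_and] at hj
      obtain ⟨hjne, hjs⟩ := hj
      have hdes : P.rk j s < P.rk j (P.DA j) := hjs ▸ hstrict j hjne
      rw [hDA] at hdes
      have hmem : s ∈ P.daR N j := P.desired_mem N j s hdes
      obtain ⟨m, hm, hrej⟩ := P.mem_daR_rejects N j s hmem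
      have hbase : P.quota s ≤
          (Finset.univ.filter fun j' => P.propose (P.daR m) j' = s).card := by
        refine hrej.2.trans (Finset.card_le_card ?_)
        intro x hx
        simp only [Finset.mem_filter] at hx ⊢
        exact ⟨hx.1, hx.2.1⟩
      have hfull : P.quota s ≤ (Finset.univ.filter fun j' => P.DA j' = s).card := by
        have hfa := P.full_after s m hbase (N - m)
        rw [Nat.add_sub_cancel' (le_of_lt hm)] at hfa
        rw [hDA]
        exact hfa
      -- decompose both fibers with the common "stay" set
      set Stay := Finset.univ.filter fun j' => ν j' = s ∧ P.DA j' = s with hStay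
      have e1 : Finset.univ.filter (fun j' => ν j' = s)
          = (A.filter fun j' => ν j' = s) ∪ Stay := by
        ext x
        simp only [hA, hStay, Finset.mem_union, Finset.mem_filter, Finset.mem_univ,
          true_and]
        constructor
        · intro hx
          by_cases hxd : ν x = P.DA x
          · exact Or.inr ⟨hx, hxd ▸ hx⟩
          · exact Or.inl ⟨hxd, hx⟩
        · rintro (⟨-, hx⟩ | ⟨hx, -⟩) <;> exact hx
      have e2 : Finset.univ.filter (fun j' => P.DA j' = s)
          = (A.filter fun j' => P.DA j' = s) ∪ Stay := by
        ext x
        simp only [hA, hStay, Finset.mem_union, Finset.mem_filter, Finset.mem_univ,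
          true_and]
        constructor
        · intro hx
          by_cases hxd : ν x = P.DA x
          · exact Or.inr ⟨hxd ▸ hx, hx⟩
          · exact Or.inl ⟨hxd, hx⟩
        · rintro (⟨-, hx⟩ | ⟨-, hx⟩) <;> exact hx
      have d1 : Disjoint (A.filter fun j' => ν j' = s) Stay := by
        rw [Finset.disjoint_left]
        intro x hx hx'
        simp only [hA, Finset.mem_filter, Finset.mem_univ, true_and] at hx
        simp only [hStay, Finset.mem_filter, Finset.mem_univ, true_and] at hx'
        exact hx.1 (hx'.1.trans hx'.2.symm)
      have d2 : Disjoint (A.filter fun j' => P.DA j' = s) Stay := by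
        rw [Finset.disjoint_left]
        intro x hx hx'
        simp only [hA, Finset.mem_filter, Finset.mem_univ, true_and] at hx
        simp only [hStay, Finset.mem_filter, Finset.mem_univ, true_and] at hx'
        exact hx.1 (hx'.1.trans hx'.2.symm)
      have c1 : (Finset.univ.filter fun j' => ν j' = s).card
          = (A.filter fun j' => ν j' = s).card + Stay.card := by
        rw [e1, Finset.card_union_of_disjoint d1]
      have c2 : (Finset.univ.filter fun j' => P.DA j' = s).card
          = (A.filter fun j' => P.DA j' = s).card + Stay.card := by
        rw [e2, Finset.card_union_of_disjoint d2]
      have hq : (Finset.univ.filter fun j' => ν j' = s).card ≤ P.quota s := hmatch s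
      omega
  -- sums of fibers
  have hsum1 : ∑ s : S, (A.filter fun j => ν j = s).card = A.card :=
    (Finset.card_eq_sum_card_fiberwise (fun x _ => Finset.mem_univ (ν x))).symm
  have hsum2 : ∑ s : S, (A.filter fun j => P.DA j = s).card = A.card :=
    (Finset.card_eq_sum_card_fiberwise (fun x _ => Finset.mem_univ (P.DA x))).symm
  -- nobody moves into the null school
  have hin0 : (A.filter fun j => ν j = P.nullSchool).card = 0 := by
    rw [Finset.card_eq_zero, Finset.filter_eq_empty_iff]
    intro j hj hjn
    simp only [hA, Finset.mem_filter, Finset.mem_univ, true_and] at hj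
    have hdes := hstrict j hj
    rw [hjn] at hdes
    rw [hDA] at hdes
    have hmem := P.desired_mem N j P.nullSchool hdes
    obtain ⟨m, -, hrej⟩ := P.mem_daR_rejects N j _ hmem
    exact P.not_rejects_null _ j hrej
  have hout_pos : 0 < (A.filter fun j => P.DA j = P.nullSchool).card :=
    Finset.card_pos.mpr ⟨i, Finset.mem_filter.mpr ⟨hiA, h⟩⟩
  have hlt : ∑ s : S, (A.filter fun j => ν j = s).card
      < ∑ s : S, (A.filter fun j => P.DA j = s).card :=
    Finset.sum_lt_sum (fun s _ => hle s)
      ⟨P.nullSchool, Finset.mem_univ _, by omega⟩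
  omega
end

section
/- If student i is assigned under DA to a school s = DA_i(P) that never rejects any applicant during the execution of the student-proposing Deferred Acceptance algorithm, then i is unimprovable: every stable-dominating matching ν satisfies ν(i) = s. -/
/-!
Every school that rejects somebody during Deferred Acceptance is full from then on, so at
the end it holds exactly its quota of DA students. In a stable-dominating matching `ν`, a
student who leaves her DA school moves to a school she prefers to it, and such a school has
rejected her. Hence the students that DA places at rejecting schools are still placed at
rejecting schools by `ν`, and they already use up all of these seats. If `i` left `s`, she
would take one more such seat, since `s` itself never rejects.
-/

theorem exists_le_succ_eq_of_monotone_of_le {u : ℕ → ℕ} (hu : Monotone u) {C : ℕ}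
    (hC : ∀ n, u n ≤ C) : ∃ n ≤ C, u (n + 1) = u n := by
  by_contra! h
  have hgrow : ∀ n ≤ C + 1, n ≤ u n := by
    intro n hn
    induction n with
    | zero => exact Nat.zero_le _
    | succ n ih =>
      have := (hu (Nat.le_add_right n 1)).lt_of_ne' (h n (by omega))
      have := ih (by omega)
      omega
  have := hgrow (C + 1) le_rfl
  have := hC (C + 1)
  omega

namespace SchoolChoice

open Finset
open scoped Classical

variable {I S : Type} [Fintype I] [Fintype S] [DecidableEq I] [DecidableEq S]
  (P : SchoolChoice I S)

theorem propose_notMem {R : I → Finset S} {j : I} (h : (univ \ R j).Nonempty) :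
    P.propose R j ∉ R j := by
  unfold propose
  rw [dif_pos h]
  exact (mem_sdiff.mp (exists_min_image _ _ h).choose_spec.1).2

theorem rk_propose_le {R : I → Finset S} {j : I} {t : S} (ht : t ∉ R j) :
    P.rk j (P.propose R j) ≤ P.rk j t := by
  have ht' : t ∈ univ \ R j := by simpa using ht
  unfold propose
  rw [dif_pos ⟨t, ht'⟩]
  exact (exists_min_image _ _ ⟨t, ht'⟩).choose_spec.2 t ht'

theorem propose_eq_of_rk_le {R : I → Finset S} {j : I} {t : S} (ht : t ∉ R j)
    (hle : P.rk j t ≤ P.rk j (P.propose R j)) : P.propose R j = t :=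
  P.rk_inj j ((P.rk_propose_le ht).antisymm hle)

theorem card_applicants_le_quota {R : I → Finset S} {t : S}
    (h : ∀ j, ¬ P.rejectsAt R t j) : #{k | P.propose R k = t} ≤ P.quota t := by
  by_contra! hlt
  have hne : ({k | P.propose R k = t} : Finset I).Nonempty :=
    card_pos.mp (by have := P.quota_pos t; omega)
  obtain ⟨j, hj, hjmax⟩ := exists_max_image _ (P.prio t) hne
  refine h j ⟨(mem_filter.mp hj).2, ?_⟩
  have hsub : ({k | P.propose R k = t} : Finset I).erase j ⊆
      ({k | P.propose R k = t ∧ P.prio t k < P.prio t j} : Finset I) := by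
    intro k hk
    obtain ⟨hkj, hk⟩ := mem_erase.mp hk
    refine mem_filter.mpr ⟨mem_univ k, (mem_filter.mp hk).2, ?_⟩
    exact (hjmax k hk).lt_of_ne fun he => hkj (P.prio_inj t he)
  calc P.quota t ≤ #(({k | P.propose R k = t} : Finset I).erase j) := by
        rw [card_erase_of_mem hj]; omega
    _ ≤ _ := card_le_card hsub

/-- Every applicant ranked above the highest-priority rejected one is kept. -/
theorem quota_le_card_held {R : I → Finset S} {t : S} (h : ∃ j, P.rejectsAt R t j) :
    P.quota t ≤ #{k | P.propose R k = t ∧ ¬ P.rejectsAt R t k} := by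
  have hne : ({j | P.rejectsAt R t j} : Finset I).Nonempty := by
    obtain ⟨j, hj⟩ := h
    exact ⟨j, by simpa using hj⟩
  obtain ⟨j, hj, hjmin⟩ := exists_min_image _ (P.prio t) hne
  refine (mem_filter.mp hj).2.2.trans (card_le_card fun k hk => ?_)
  obtain ⟨hkt, hkj⟩ := (mem_filter.mp hk).2
  refine mem_filter.mpr ⟨mem_univ k, hkt, fun hkr => ?_⟩
  exact hkj.not_ge (hjmin k (by simpa using hkr))

theorem not_rejectsAt_nullSchool (R : I → Finset S) (j : I) :
    ¬ P.rejectsAt R P.nullSchool j := by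
  rintro ⟨-, hq⟩
  have : #{k | P.propose R k = P.nullSchool ∧
      P.prio P.nullSchool k < P.prio P.nullSchool j} < Fintype.card I :=
    card_lt_univ_of_notMem (x := j) (by simp)
  rw [P.quota_null] at hq
  omega

theorem mem_daR_succ {n : ℕ} {j : I} {t : S} :
    t ∈ P.daR (n + 1) j ↔ t ∈ P.daR n j ∨ P.rejectsAt (P.daR n) t j := by
  simp [daR, stepR]

theorem daR_mono : Monotone P.daR :=
  monotone_nat_of_le_succ fun _ _ => subset_union_left

theorem mem_daR_iff {n : ℕ} {j : I} {t : S} :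
    t ∈ P.daR n j ↔ ∃ m < n, P.rejectsAt (P.daR m) t j := by
  induction n with
  | zero => simp [daR]
  | succ n ih =>
    rw [mem_daR_succ, ih]
    constructor
    · rintro (⟨m, hm, h⟩ | h)
      exacts [⟨m, by omega, h⟩, ⟨n, by omega, h⟩]
    · rintro ⟨m, hm, h⟩
      rcases (Nat.lt_succ_iff.mp hm).lt_or_eq with hm | rfl
      exacts [Or.inl ⟨m, hm, h⟩, Or.inr h]

theorem propose_daR_notMem (n : ℕ) (j : I) : P.propose (P.daR n) j ∉ P.daR n j := by
  refine P.propose_notMem ⟨P.nullSchool, mem_sdiff.mpr ⟨mem_univ _, ?_⟩⟩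
  rw [mem_daR_iff]
  rintro ⟨m, -, h⟩
  exact P.not_rejectsAt_nullSchool _ _ h

theorem propose_daR_succ_of_not_rejectsAt {n : ℕ} {k : I} {t : S}
    (hk : P.propose (P.daR n) k = t) (hkt : ¬ P.rejectsAt (P.daR n) t k) :
    P.propose (P.daR (n + 1)) k = t := by
  have ht : t ∉ P.daR (n + 1) k := by
    rw [mem_daR_succ, not_or]
    exact ⟨hk ▸ P.propose_daR_notMem n k, hkt⟩
  refine P.propose_eq_of_rk_le ht ?_
  rw [← hk]
  exact P.rk_propose_le fun h => P.propose_daR_notMem (n + 1) k (P.daR_mono n.le_succ k h)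

theorem not_rejectsAt_of_daR_succ_eq {n : ℕ} (h : P.daR (n + 1) = P.daR n) (t : S) (j : I) :
    ¬ P.rejectsAt (P.daR n) t j := by
  intro hr
  have ht : t ∈ P.daR (n + 1) j := P.mem_daR_succ.mpr (Or.inr hr)
  rw [h, ← hr.1] at ht
  exact P.propose_daR_notMem n j ht

theorem daR_eq_of_le {n m : ℕ} (h : P.daR (n + 1) = P.daR n) (hnm : n ≤ m) :
    P.daR m = P.daR n := by
  induction m, hnm using Nat.le_induction with
  | base => rfl
  | succ m _ ih =>
    change P.stepR (P.daR m) = P.daR n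
    rw [ih]
    exact h

/-- Rejection sets only grow and have at most `|I|·|S|` elements in total. -/
theorem exists_daR_succ_eq :
    ∃ n ≤ Fintype.card I * Fintype.card S, P.daR (n + 1) = P.daR n := by
  have hsub : ∀ n j, P.daR n j ⊆ P.daR (n + 1) j := fun n => P.daR_mono n.le_succ
  obtain ⟨n, hn, h⟩ := exists_le_succ_eq_of_monotone_of_le (u := fun n => ∑ j, #(P.daR n j))
    (fun a b hab => sum_le_sum fun j _ => card_le_card (P.daR_mono hab j))
    (C := Fintype.card I * Fintype.card S) fun n => by
      simpa using sum_le_card_nsmul univ (fun j => #(P.daR n j)) _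
        fun j _ => card_le_univ (P.daR n j)
  refine ⟨n, hn, funext fun j => ?_⟩
  have hcard := (sum_eq_sum_iff_of_le fun j _ => card_le_card (hsub n j)).mp h.symm j (mem_univ j)
  exact (eq_of_subset_of_card_le (hsub n j) hcard.ge).symm

theorem not_rejectsAt_of_le {m : ℕ} (hm : Fintype.card I * Fintype.card S ≤ m) (t : S) (j : I) :
    ¬ P.rejectsAt (P.daR m) t j := by
  obtain ⟨n, hn, h⟩ := P.exists_daR_succ_eq
  rw [P.daR_eq_of_le h (hn.trans hm)]
  exact P.not_rejectsAt_of_daR_succ_eq h t j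

theorem quota_le_card_applicants_succ {n : ℕ} {t : S}
    (h : (∃ j, P.rejectsAt (P.daR n) t j) ∨ P.quota t ≤ #{k | P.propose (P.daR n) k = t}) :
    P.quota t ≤ #{k | P.propose (P.daR (n + 1)) k = t} := by
  by_cases hr : ∃ j, P.rejectsAt (P.daR n) t j
  · refine (P.quota_le_card_held hr).trans (card_le_card fun k hk => ?_)
    obtain ⟨hkt, hkr⟩ := (mem_filter.mp hk).2
    exact mem_filter.mpr ⟨mem_univ k, P.propose_daR_succ_of_not_rejectsAt hkt hkr⟩
  · push Not at hr
    refine (h.resolve_left (by simpa using hr)).trans (card_le_card fun k hk => ?_)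
    have hkt := (mem_filter.mp hk).2
    exact mem_filter.mpr ⟨mem_univ k, P.propose_daR_succ_of_not_rejectsAt hkt (hr k)⟩

theorem quota_le_card_applicants_of_rejectsAt {m k : ℕ} {t : S} {j : I}
    (hj : P.rejectsAt (P.daR m) t j) (hmk : m + 1 ≤ k) :
    P.quota t ≤ #{i | P.propose (P.daR k) i = t} := by
  induction k, hmk using Nat.le_induction with
  | base => exact P.quota_le_card_applicants_succ (Or.inl ⟨j, hj⟩)
  | succ k _ ih => exact P.quota_le_card_applicants_succ (Or.inr ih)

theorem isMatching_DA : P.IsMatching P.DA := fun t =>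
  P.card_applicants_le_quota fun j => P.not_rejectsAt_of_le (by omega) t j

noncomputable def rejectingSchools : Finset S :=
  {t | ∃ m j, P.rejectsAt (P.daR m) t j}

theorem mem_rejectingSchools {t : S} :
    t ∈ P.rejectingSchools ↔ ∃ m j, P.rejectsAt (P.daR m) t j := by
  simp [rejectingSchools]

theorem card_DA_eq_quota_of_mem_rejectingSchools {t : S} (ht : t ∈ P.rejectingSchools) :
    #{k | P.DA k = t} = P.quota t := by
  obtain ⟨m, j, hj⟩ := P.mem_rejectingSchools.mp ht
  have hm : m < Fintype.card I * Fintype.card S := by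
    by_contra! hm
    exact P.not_rejectsAt_of_le hm t j hj
  exact (P.isMatching_DA t).antisymm (P.quota_le_card_applicants_of_rejectsAt hj (by omega))

theorem mem_rejectingSchools_of_stableDominating {ν : I → S} (hν : P.StableDominating ν)
    {j : I} (hj : ν j ≠ P.DA j) : ν j ∈ P.rejectingSchools := by
  have hmem : ν j ∈ P.daR (Fintype.card I * Fintype.card S + 1) j := by
    by_contra hnot
    exact hj (P.propose_eq_of_rk_le hnot (hν.2 j)).symm
  obtain ⟨m, -, hm⟩ := P.mem_daR_iff.mp hmem
  exact P.mem_rejectingSchools.mpr ⟨m, j, hm⟩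

theorem IsMatching.mem_of_mem_of_fills {P : SchoolChoice I S} {μ ν : I → S}
    (hν : P.IsMatching ν) {F : Finset S} (hμ : ∀ t ∈ F, #{j | μ j = t} = P.quota t)
    (hμν : ∀ j, μ j ∈ F → ν j ∈ F) {j : I} (hj : ν j ∈ F) : μ j ∈ F := by
  have hsub : ({k | μ k ∈ F} : Finset I) ⊆ ({k | ν k ∈ F} : Finset I) := fun k hk =>
    mem_filter.mpr ⟨mem_univ k, hμν k (mem_filter.mp hk).2⟩
  have hcard : #{k | ν k ∈ F} ≤ #{k | μ k ∈ F} := by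
    rw [← sum_card_fiberwise_eq_card_filter, ← sum_card_fiberwise_eq_card_filter]
    exact sum_le_sum fun t ht => (hν t).trans (hμ t ht).ge
  have hj' : j ∈ ({k | ν k ∈ F} : Finset I) := mem_filter.mpr ⟨mem_univ j, hj⟩
  rw [← eq_of_subset_of_card_le hsub hcard] at hj'
  exact (mem_filter.mp hj').2

end SchoolChoice

/-- If student `i` is assigned under DA to a school `s = DA_i(P)`
that never rejects any applicant during the execution of DA, then `i` is
unimprovable: every stable-dominating matching `ν` satisfies `ν i = s`. -/
theorem no_rejection_unimprovable {I S : Type} [Fintype I] [Fintype S]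
    [DecidableEq I] [DecidableEq S] (P : SchoolChoice I S) (i : I) (s : S)
    (hs : P.DA i = s)
    (hnoreject : ∀ (n : ℕ) (j : I), ¬ P.rejectsAt (P.daR n) s j) :
    ∀ ν : I → S, P.StableDominating ν → ν i = s := by
  intro ν hν
  by_contra hνi
  have hstay : ∀ j, P.DA j ∈ P.rejectingSchools → ν j ∈ P.rejectingSchools := fun j hj => by
    by_cases h : ν j = P.DA j
    exacts [h ▸ hj, P.mem_rejectingSchools_of_stableDominating hν h]
  have hsF : s ∈ P.rejectingSchools :=
    hs ▸ hν.1.mem_of_mem_of_fills (fun _ => P.card_DA_eq_quota_of_mem_rejectingSchools) hstay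
      (P.mem_rejectingSchools_of_stableDominating hν (hs ▸ hνi))
  obtain ⟨m, j, hj⟩ := P.mem_rejectingSchools.mp hsF
  exact hnoreject m j hj
end

section
/- For every integer n ≥ 2 there exists a school choice problem P with n students and n schools, each of quota 1 (every student ranking all n schools above the null school), such that: (i) DA(P) is the unique stable matching of P and is Pareto-efficient; (ii) max_{i∈I} rk_i(DA_i(P)) = n; and (iii) there exists a matching μ of P with max_{i∈I} rk_i(μ(i)) = 2. Consequently, every stable-dominating matching ν of P satisfies max_{i∈I} rk_i(ν(i)) = n, so the Rawlsian inequality ratio of any stable-dominating mechanism attains n/2. -/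
/-!
Student `i ≥ 1` has school `i - 1` as first choice and top priority there, so every stable
matching and every matching weakly preferred to DA by all students gives it to her; student `0`,
who ranks the schools by index, is then left with school `n - 1`, her `n`-th choice. In DA she
is indeed rejected by schools `0, …, n - 2` in turn. The matching `i ↦ i` gives every student
one of her two first choices.
-/

theorem Finset.sup_univ_eq_of_forall_le {ι α : Type*} [Fintype ι] [SemilatticeSup α]
    [OrderBot α] {f : ι → α} {m : α} (hle : ∀ i, f i ≤ m) (i₀ : ι) (h : f i₀ = m) :
    Finset.univ.sup f = m :=
  (Finset.sup_le fun i _ => hle i).antisymm (Finset.le_sup_of_le (Finset.mem_univ i₀) h.ge)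

namespace SchoolChoice

open scoped Classical

section General

variable {I S : Type} [Fintype I] [Fintype S] [DecidableEq I] [DecidableEq S]
  (P : SchoolChoice I S)

theorem one_le_rk (i : I) (s : S) : 1 ≤ P.rk i s :=
  (Finset.mem_Icc.mp (P.rk_mem i s)).1

theorem propose_eq_of_forall_le {R : I → Finset S} {i : I} {s₀ : S} (h₀ : s₀ ∉ R i)
    (hmin : ∀ s, s ∉ R i → P.rk i s₀ ≤ P.rk i s) : P.propose R i = s₀ := by
  have hs₀ : s₀ ∈ Finset.univ \ R i := by simpa using h₀
  rw [propose, dif_pos ⟨s₀, hs₀⟩]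
  obtain ⟨hmem, hle⟩ := (Finset.exists_min_image _ (P.rk i) ⟨s₀, hs₀⟩).choose_spec
  exact P.rk_inj i <| (hle s₀ hs₀).antisymm (hmin _ (Finset.mem_sdiff.mp hmem).2)

theorem rejectsAt_iff_of_quota_eq_one {R : I → Finset S} {s : S} {i : I}
    (hs : P.quota s = 1) :
    P.rejectsAt R s i ↔
      P.propose R i = s ∧ ∃ j, P.propose R j = s ∧ P.prio s j < P.prio s i := by
  simp only [rejectsAt, hs, Nat.one_le_iff_ne_zero, ne_eq, Finset.card_eq_zero,
    ← Finset.nonempty_iff_ne_empty, Finset.filter_nonempty_iff, Finset.mem_univ, true_and]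

theorem isMatching_of_injective {μ : I → S} (hμ : Function.Injective μ) : P.IsMatching μ :=
  fun s => (Finset.card_le_one.mpr fun _ ha _ hb => by
    simp only [Finset.mem_filter] at ha hb
    exact hμ (ha.2.trans hb.2.symm)).trans (P.quota_pos s)

theorem eq_of_isMatching_of_quota_eq_one {μ : I → S} (hμ : P.IsMatching μ) {s : S}
    (hs : P.quota s = 1) {i j : I} (hi : μ i = s) (hj : μ j = s) : i = j :=
  Finset.card_le_one.mp ((hμ s).trans hs.le) i (by simpa using hi) j (by simpa using hj)

theorem NonWasteful.exists_eq_of_desires {μ : I → S} (hμ : P.NonWasteful μ) {i : I} {s : S}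
    (hs : P.Desires μ i s) : ∃ j, μ j = s := by
  have hcard := hμ s ⟨i, hs⟩
  obtain ⟨j, hj⟩ := Finset.card_pos.mp (hcard ▸ P.quota_pos s)
  exact ⟨j, (Finset.mem_filter.mp hj).2⟩

theorem paretoEfficient_of_forall_rk_le_imp_eq {μ : I → S} (hμ : P.IsMatching μ)
    (h : ∀ ν, P.IsMatching ν → (∀ i, P.rk i (ν i) ≤ P.rk i (μ i)) → ν = μ) :
    P.ParetoEfficient μ := by
  refine ⟨hμ, fun ν hν ⟨hle, i, hlt⟩ => ?_⟩
  rw [h ν hν hle] at hlt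
  exact lt_irrefl _ hlt

end General

/-- Student `i ≥ 1` ranks school `i - 1` first and school `i` second; the same formula makes
student `0` rank the schools by index, since `0 - 1 = 0` in `ℕ`. -/
def rawlsianExample (n : ℕ) [NeZero n] : SchoolChoice (Fin n) (Fin (n + 1)) where
  nullSchool := Fin.last n
  quota s := if s = Fin.last n then n else 1
  rk i s :=
    if (s : ℕ) = i - 1 then 1
    else if (s : ℕ) = i then 2
    else if (s : ℕ) < i then s + 3
    else s + 1
  prio s i := if (i : ℕ) = s + 1 then 0 else i + 1
  quota_pos s := by
    have := NeZero.one_le (n := n)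
    split <;> omega
  quota_null := by simp
  rk_inj i s t h := by
    have := i.isLt
    ext
    dsimp only at h
    split_ifs at h <;> omega
  rk_mem i s := by
    have := i.isLt
    have := s.isLt
    simp only [Finset.mem_Icc, Fintype.card_fin]
    split_ifs <;> omega
  prio_inj s i j h := by
    ext
    dsimp only at h
    split_ifs at h <;> omega

section Example

variable {n : ℕ} [NeZero n]

theorem quota_rawlsianExample_of_lt {s : Fin (n + 1)} (hs : (s : ℕ) < n) :
    (rawlsianExample n).quota s = 1 :=
  if_neg (Fin.ne_of_lt hs)

def rejectedBefore (n t : ℕ) (i : Fin n) : Finset (Fin (n + 1)) :=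
  Finset.univ.filter fun s => (i : ℕ) = 0 ∧ (s : ℕ) < min t (n - 1)

theorem propose_rejectedBefore (t : ℕ) (i : Fin n) :
    (rawlsianExample n).propose (rejectedBefore n t) i =
      ⟨if (i : ℕ) = 0 then min t (n - 1) else i - 1, by split <;> omega⟩ := by
  have := i.isLt
  apply propose_eq_of_forall_le
  · simp only [rejectedBefore, Finset.mem_filter, Finset.mem_univ, true_and]
    split <;> omega
  · intro s hs
    simp only [rejectedBefore, Finset.mem_filter, Finset.mem_univ, true_and] at hs
    simp only [rawlsianExample]
    split_ifs <;> omega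

theorem rejectsAt_rejectedBefore_iff (t : ℕ) (s : Fin (n + 1)) (i : Fin n) :
    (rawlsianExample n).rejectsAt (rejectedBefore n t) s i ↔
      (i : ℕ) = 0 ∧ (s : ℕ) = t ∧ t < n - 1 := by
  have := i.isLt
  constructor
  · intro h
    have hs : (s : ℕ) < n := by
      have hprop := congrArg Fin.val h.1
      rw [propose_rejectedBefore, Fin.val_mk] at hprop
      have := NeZero.pos n
      split at hprop <;> omega
    rw [rejectsAt_iff_of_quota_eq_one _ (quota_rawlsianExample_of_lt hs),
      propose_rejectedBefore] at h
    obtain ⟨hi, j, hj, hprio⟩ := h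
    have := j.isLt
    simp only [Fin.ext_iff, rawlsianExample] at hi hj hprio
    split_ifs at hi hj hprio <;> omega
  · rintro ⟨hi, hs, ht⟩
    rw [rejectsAt_iff_of_quota_eq_one _ (quota_rawlsianExample_of_lt (by omega))]
    refine ⟨?_, ⟨t + 1, by omega⟩, ?_, ?_⟩
    · simp only [propose_rejectedBefore, hi, ↓reduceIte, Fin.ext_iff, hs]; omega
    · simp [propose_rejectedBefore, Fin.ext_iff, hs]
    · simp only [rawlsianExample]
      split_ifs <;> omega

theorem daR_rawlsianExample (t : ℕ) : (rawlsianExample n).daR t = rejectedBefore n t := by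
  induction t with
  | zero => ext; simp [daR, rejectedBefore]
  | succ t ih =>
    ext i s
    simp only [daR, ih, stepR, rejectedBefore, Finset.mem_union, Finset.mem_filter,
      Finset.mem_univ, true_and, rejectsAt_rejectedBefore_iff]
    omega

theorem val_DA_rawlsianExample (i : Fin n) :
    ((rawlsianExample n).DA i : ℕ) = if (i : ℕ) = 0 then n - 1 else i - 1 := by
  have : n - 1 ≤ n * (n + 1) := (Nat.sub_le n 1).trans (Nat.le_mul_of_pos_right n (by omega))
  simp only [DA, daR_rawlsianExample, propose_rejectedBefore, Fintype.card_fin]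
  split <;> omega

theorem rk_rawlsianExample_last (i : Fin n) : (rawlsianExample n).rk i (Fin.last n) = n + 1 := by
  have := i.isLt
  simp only [rawlsianExample, Fin.val_last]
  split_ifs <;> omega

theorem rk_rawlsianExample_eq_one_iff (i : Fin n) (s : Fin (n + 1)) :
    (rawlsianExample n).rk i s = 1 ↔ (s : ℕ) = i - 1 := by
  simp only [rawlsianExample]
  split_ifs <;> omega

theorem rk_DA_rawlsianExample (i : Fin n) :
    (rawlsianExample n).rk i ((rawlsianExample n).DA i) = if (i : ℕ) = 0 then n else 1 := by
  have := val_DA_rawlsianExample i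
  simp only [rawlsianExample] at this ⊢
  split_ifs at this ⊢ <;> omega

theorem DA_rawlsianExample_injective : Function.Injective (rawlsianExample n).DA := by
  intro i j h
  have := i.isLt
  have := j.isLt
  rw [Fin.ext_iff, val_DA_rawlsianExample, val_DA_rawlsianExample] at h
  ext
  split_ifs at h <;> omega

theorem eq_DA_rawlsianExample {ν : Fin n → Fin (n + 1)} (hν : (rawlsianExample n).IsMatching ν)
    (hpos : ∀ i : Fin n, (i : ℕ) ≠ 0 → (rawlsianExample n).rk i (ν i) = 1)
    (hzero : ∀ i : Fin n, (i : ℕ) = 0 → ν i ≠ Fin.last n) :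
    ν = (rawlsianExample n).DA := by
  have hval : ∀ i : Fin n, (i : ℕ) ≠ 0 → (ν i : ℕ) = i - 1 := fun i hi =>
    (rk_rawlsianExample_eq_one_iff i (ν i)).mp (hpos i hi)
  funext i
  ext
  rw [val_DA_rawlsianExample]
  split_ifs with hi
  · have hlt : (ν i : ℕ) < n := Fin.val_lt_last (hzero i hi)
    by_contra hne
    have hj := hval ⟨ν i + 1, by omega⟩ (by simp)
    have := eq_of_isMatching_of_quota_eq_one _ hν (quota_rawlsianExample_of_lt hlt)
      (Fin.ext (by simpa using hj)) rfl
    simp only [Fin.ext_iff] at this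
    omega
  · exact hval i hi

theorem eq_DA_rawlsianExample_of_forall_rk_le {ν : Fin n → Fin (n + 1)}
    (hν : (rawlsianExample n).IsMatching ν)
    (hle : ∀ i, (rawlsianExample n).rk i (ν i) ≤
      (rawlsianExample n).rk i ((rawlsianExample n).DA i)) :
    ν = (rawlsianExample n).DA := by
  refine eq_DA_rawlsianExample hν (fun i hi => ?_) (fun i hi hlast => ?_)
  · have := hle i
    rw [rk_DA_rawlsianExample, if_neg hi] at this
    exact this.antisymm (one_le_rk _ i _)
  · have := hle i
    rw [rk_DA_rawlsianExample, if_pos hi, hlast, rk_rawlsianExample_last] at this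
    omega

theorem eq_DA_rawlsianExample_of_stable {μ : Fin n → Fin (n + 1)}
    (hμ : (rawlsianExample n).Stable μ) : μ = (rawlsianExample n).DA := by
  obtain ⟨hmatch, hwaste, hblock⟩ := hμ
  have hpos : ∀ i : Fin n, (i : ℕ) ≠ 0 → (rawlsianExample n).rk i (μ i) = 1 := by
    intro i hi
    -- otherwise `i` desires the full school `i - 1`, where she has top priority
    by_contra hne
    have hi1 : (rawlsianExample n).rk i ⟨i - 1, by omega⟩ = 1 :=
      (rk_rawlsianExample_eq_one_iff _ _).mpr rfl
    have hdes : (rawlsianExample n).Desires μ i ⟨i - 1, by omega⟩ := by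
      have := (rawlsianExample n).one_le_rk i (μ i)
      rw [Desires, hi1]
      omega
    obtain ⟨j, hj⟩ := hwaste.exists_eq_of_desires _ hdes
    refine hblock ⟨i, j, _, hdes, hj, ?_⟩
    have hji : j ≠ i := by rintro rfl; exact hne (hj ▸ hi1)
    simp only [rawlsianExample, Fin.ext_iff] at hji ⊢
    split_ifs <;> omega
  -- an unassigned student `0` would desire school `n - 1`, which only student `n` could fill
  refine eq_DA_rawlsianExample hmatch hpos fun i hi hlast => ?_
  have hdes : (rawlsianExample n).Desires μ i ⟨n - 1, by omega⟩ := by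
    rw [Desires, hlast, rk_rawlsianExample_last]
    simp only [rawlsianExample]
    split_ifs <;> omega
  obtain ⟨j, hj⟩ := hwaste.exists_eq_of_desires _ hdes
  have hji : (j : ℕ) ≠ 0 := by
    rintro hj0
    obtain rfl : j = i := Fin.ext (hj0.trans hi.symm)
    simp only [hlast, Fin.ext_iff, Fin.val_last] at hj
    have := NeZero.pos n
    omega
  have := (rk_rawlsianExample_eq_one_iff j _).mp (hpos j hji)
  rw [hj, Fin.val_mk] at this
  omega

theorem desires_DA_rawlsianExample {i : Fin n} {s : Fin (n + 1)}
    (h : (rawlsianExample n).Desires (rawlsianExample n).DA i s) :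
    (i : ℕ) = 0 ∧ (s : ℕ) < n - 1 := by
  have := (rawlsianExample n).one_le_rk i s
  rw [Desires, rk_DA_rawlsianExample] at h
  split_ifs at h with hi
  · simp only [rawlsianExample] at h
    refine ⟨hi, ?_⟩
    split_ifs at h <;> omega
  · omega

theorem stable_DA_rawlsianExample : (rawlsianExample n).Stable (rawlsianExample n).DA := by
  refine ⟨isMatching_of_injective _ DA_rawlsianExample_injective, fun s ⟨i, hi⟩ => ?_, ?_⟩
  · obtain ⟨-, hs⟩ := desires_DA_rawlsianExample hi
    have hj : (rawlsianExample n).DA ⟨s + 1, by omega⟩ = s := by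
      ext
      simp only [val_DA_rawlsianExample, Nat.add_one_ne_zero, if_false]
      omega
    rw [quota_rawlsianExample_of_lt (by omega), ← hj]
    simp only [DA_rawlsianExample_injective.eq_iff, Finset.filter_eq', Finset.mem_univ, if_true,
      Finset.card_singleton]
  · rintro ⟨i, j, s, hdes, hj, hprio⟩
    obtain ⟨hi, hs⟩ := desires_DA_rawlsianExample hdes
    have := val_DA_rawlsianExample j
    rw [hj] at this
    simp only [rawlsianExample] at hprio
    split_ifs at this hprio <;> omega

theorem sup_rk_DA_rawlsianExample :
    (Finset.univ.sup fun i : Fin n => (rawlsianExample n).rk i ((rawlsianExample n).DA i)) = n :=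
  Finset.sup_univ_eq_of_forall_le (fun i => by rw [rk_DA_rawlsianExample]; split <;> omega)
    ⟨0, NeZero.pos n⟩ (by rw [rk_DA_rawlsianExample, if_pos rfl])

theorem sup_rk_castSucc_rawlsianExample (hn : 2 ≤ n) :
    (Finset.univ.sup fun i : Fin n => (rawlsianExample n).rk i i.castSucc) = 2 := by
  have hrk : ∀ i : Fin n,
      (rawlsianExample n).rk i i.castSucc = if (i : ℕ) = 0 then 1 else 2 := by
    intro i
    simp only [rawlsianExample, Fin.val_castSucc]
    split_ifs <;> omega
  exact Finset.sup_univ_eq_of_forall_le (fun i => by rw [hrk]; split <;> omega)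
    ⟨1, hn⟩ (by rw [hrk, if_neg one_ne_zero])

theorem sup_rk_rawlsianExample_of_stableDominating {ν : Fin n → Fin (n + 1)}
    (hν : (rawlsianExample n).StableDominating ν) :
    (Finset.univ.sup fun i : Fin n => (rawlsianExample n).rk i (ν i)) = n := by
  rw [eq_DA_rawlsianExample_of_forall_rk_le hν.1 hν.2]
  exact sup_rk_DA_rawlsianExample

end Example

end SchoolChoice

/-- For every `n ≥ 2` there is a school choice problem with `n`
students and `n` (ordinary) schools of quota 1, every student ranking all `n`
schools above the null school, such that: (i) `DA(P)` is the unique stable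
matching and is Pareto-efficient; (ii) `max_i rk_i(DA_i(P)) = n`; (iii) some
matching `μ` has `max_i rk_i(μ i) = 2`.  Consequently every stable-dominating
matching `ν` has `max_i rk_i(ν i) = n`, so the Rawlsian inequality ratio of
any stable-dominating mechanism attains `n/2`. -/
theorem rawlsian_lower_bound_example (n : ℕ) (hn : 2 ≤ n) :
    ∃ P : SchoolChoice (Fin n) (Fin (n + 1)),
      P.nullSchool = Fin.last n ∧
      (∀ s : Fin (n + 1), s ≠ P.nullSchool → P.quota s = 1) ∧
      (∀ i : Fin n, P.rk i P.nullSchool = n + 1) ∧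
      -- (i) DA is the unique stable matching and is Pareto-efficient
      P.Stable P.DA ∧
      (∀ μ : Fin n → Fin (n + 1), P.Stable μ → μ = P.DA) ∧
      P.ParetoEfficient P.DA ∧
      -- (ii) the worst-off student under DA has rank n
      (Finset.univ.sup fun i : Fin n => P.rk i (P.DA i)) = n ∧
      -- (iii) an alternative matching whose worst-off student has rank 2
      (∃ μ : Fin n → Fin (n + 1), P.IsMatching μ ∧
        (Finset.univ.sup fun i : Fin n => P.rk i (μ i)) = 2) ∧
      -- consequently, every stable-dominating matching has max rank n
      (∀ ν : Fin n → Fin (n + 1), P.StableDominating ν →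
        (Finset.univ.sup fun i : Fin n => P.rk i (ν i)) = n) := by
  have : NeZero n := ⟨by omega⟩
  open SchoolChoice in
  exact ⟨rawlsianExample n, rfl, fun s hs => if_neg hs, rk_rawlsianExample_last,
    stable_DA_rawlsianExample, fun μ hμ => eq_DA_rawlsianExample_of_stable hμ,
    paretoEfficient_of_forall_rk_le_imp_eq _
      (isMatching_of_injective _ DA_rawlsianExample_injective)
      fun ν hν hle => eq_DA_rawlsianExample_of_forall_rk_le hν hle,
    sup_rk_DA_rawlsianExample,
    ⟨Fin.castSucc, isMatching_of_injective _ (Fin.castSucc_injective n),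
      sup_rk_castSucc_rawlsianExample hn⟩,
    fun ν hν => sup_rk_rawlsianExample_of_stableDominating hν⟩
end

section
/- Every Pareto-efficient matching is an outcome of a serial dictatorship: for any school choice problem P and any Pareto-efficient matching μ of P, there exists a linear order i_1, …, i_m of the students such that the serial dictatorship with this order produces exactly μ. -/
namespace SchoolChoice

variable {I S : Type} [Fintype I] [Fintype S] [DecidableEq I] [DecidableEq S]

/-- The most preferred school of student `i` that still has remaining capacity
(given that `used s` seats of school `s` are already taken). -/
noncomputable def bestAvailable (P : SchoolChoice I S) (used : S → ℕ) (i : I) : S :=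
  if h : (Finset.univ.filter fun s => used s < P.quota s).Nonempty then
    (Finset.exists_min_image (Finset.univ.filter fun s => used s < P.quota s)
      (P.rk i) h).choose
  else P.nullSchool

/-- Run the serial dictatorship on the remaining list of students, given the
seats already used and the assignment built so far. -/
noncomputable def sdRun (P : SchoolChoice I S) :
    List I → (S → ℕ) → (I → S) → (I → S)
  | [], _, f => f
  | i :: rest, used, f =>
      let s := P.bestAvailable used i
      P.sdRun rest (Function.update used s (used s + 1)) (Function.update f i s)

/-- The serial dictatorship with picking order `order`: sequentially, each
student in `order` is assigned her most preferred school with remaining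
capacity. -/
noncomputable def serialDictatorship (P : SchoolChoice I S) (order : List I) :
    I → S :=
  P.sdRun order (fun _ => 0) (fun _ => P.nullSchool)

end SchoolChoice

namespace SchoolChoice

open scoped Classical

variable {I S : Type} [Fintype I] [Fintype S] [DecidableEq I] [DecidableEq S]

/-- Selection lemma: in a Pareto-efficient matching, for any nonempty set `R`
of "remaining" students, some student in `R` gets a school that is her
favorite among schools with remaining capacity. -/
lemma exists_top (P : SchoolChoice I S) (μ : I → S) (hμ : P.ParetoEfficient μ)
    (R : Finset I) (hR : R.Nonempty) :
    ∃ i ∈ R, ∀ s : S,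
      (Finset.univ.filter fun j => μ j = s ∧ j ∉ R).card < P.quota s →
      P.rk i (μ i) ≤ P.rk i s := by
  by_contra hcon
  push_neg at hcon
  -- every remaining student strictly desires some remaining-capacity school
  have key : ∀ i ∈ R, ∃ j ∈ R, P.rk i (μ j) < P.rk i (μ i) := by
    intro i hi
    obtain ⟨s, hs1, hs2⟩ := hcon i hi
    by_cases hfull : (Finset.univ.filter fun j => μ j = s).card < P.quota s
    · -- school `s` is not full: moving `i` there Pareto-improves, contradiction
      exfalso
      set ν := Function.update μ i s with hν
      have hmatch : P.IsMatching ν := by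
        intro t
        by_cases ht : t = s
        · subst ht
          have hsub : (Finset.univ.filter fun j => ν j = t) ⊆
              insert i (Finset.univ.filter fun j => μ j = t) := by
            intro j hj
            simp only [Finset.mem_filter, Finset.mem_univ, true_and] at hj
            by_cases hji : j = i
            · simp [hji]
            · rw [hν, Function.update_of_ne hji] at hj
              exact Finset.mem_insert_of_mem (by simp [hj])
          calc (Finset.univ.filter fun j => ν j = t).card
              ≤ (insert i (Finset.univ.filter fun j => μ j = t)).card :=
                Finset.card_le_card hsub
            _ ≤ (Finset.univ.filter fun j => μ j = t).card + 1 :=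
                Finset.card_insert_le _ _
            _ ≤ P.quota t := hfull
        · have hsub : (Finset.univ.filter fun j => ν j = t) ⊆
              (Finset.univ.filter fun j => μ j = t) := by
            intro j hj
            simp only [Finset.mem_filter, Finset.mem_univ, true_and] at hj ⊢
            by_cases hji : j = i
            · subst hji; rw [hν, Function.update_self] at hj; exact absurd hj.symm ht
            · rwa [hν, Function.update_of_ne hji] at hj
          exact le_trans (Finset.card_le_card hsub) (hμ.1 t)
      refine hμ.2 ν hmatch ⟨?_, ⟨i, ?_⟩⟩
      · intro j
        by_cases hji : j = i
        · subst hji; rw [hν, Function.update_self]; exact le_of_lt hs2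
        · rw [hν, Function.update_of_ne hji]
      · rw [hν, Function.update_self]; exact hs2
    · -- `s` is full in `μ` but not full among students outside `R`
      push_neg at hfull
      have hex : ∃ j ∈ R, μ j = s := by
        by_contra hne
        push_neg at hne
        have heq : (Finset.univ.filter fun j => μ j = s ∧ j ∉ R) =
            (Finset.univ.filter fun j => μ j = s) := by
          ext j
          simp only [Finset.mem_filter, Finset.mem_univ, true_and]
          exact ⟨fun h => h.1, fun h => ⟨h, fun hjR => hne j hjR h⟩⟩
        rw [heq] at hs1
        exact absurd hfull (not_le.mpr hs1)
      obtain ⟨j, hjR, hjs⟩ := hex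
      exact ⟨j, hjR, by rw [hjs]; exact hs2⟩
  -- choose the "envied" student
  have hg : ∃ g : I → I, ∀ i ∈ R, g i ∈ R ∧ P.rk i (μ (g i)) < P.rk i (μ i) := by
    choose g hg1 hg2 using fun i (hi : i ∈ R) => key i hi
    classical
    refine ⟨fun i => if hi : i ∈ R then g i hi else i, fun i hi => ?_⟩
    simp only [dif_pos hi]
    exact ⟨hg1 i hi, hg2 i hi⟩
  obtain ⟨g, hg⟩ := hg
  obtain ⟨i₀, hi₀⟩ := hR
  set u : ℕ → I := fun n => g^[n] i₀ with hu
  have huR : ∀ n, u n ∈ R := by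
    intro n
    induction n with
    | zero => exact hi₀
    | succ n ih =>
        have : u (n + 1) = g (u n) := Function.iterate_succ_apply' g n i₀
        rw [this]; exact (hg _ ih).1
  obtain ⟨a, b, hab, huab⟩ := Finite.exists_ne_map_eq_of_infinite u
  obtain ⟨a, b, hlt, huab⟩ : ∃ a b : ℕ, a < b ∧ u a = u b := by
    rcases lt_or_gt_of_ne hab with h | h
    · exact ⟨a, b, h, huab⟩
    · exact ⟨b, a, h, huab.symm⟩
  set x := u a with hxdef
  set m := b - a with hmdef
  have hm : 0 < m := by omega
  have hx : g^[m] x = x := by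
    have : g^[m] (g^[a] i₀) = g^[m + a] i₀ := (Function.iterate_add_apply g m a i₀).symm
    rw [hxdef, hu]
    simp only [this]
    have : m + a = b := by omega
    rw [this]; exact huab.symm
  set O : Finset I := (Finset.range m).image (fun k => g^[k] x) with hO
  have hOx : x ∈ O := by
    rw [hO]; exact Finset.mem_image.mpr ⟨0, Finset.mem_range.mpr hm, rfl⟩
  have hOR : ∀ j ∈ O, j ∈ R := by
    intro j hj
    rw [hO] at hj
    obtain ⟨k, _, rfl⟩ := Finset.mem_image.mp hj
    have : g^[k] x = u (k + a) := by
      rw [hxdef, hu]; exact (Function.iterate_add_apply g k a i₀).symm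
    rw [this]; exact huR _
  have hgO : ∀ j ∈ O, g j ∈ O := by
    intro j hj
    rw [hO] at hj ⊢
    obtain ⟨k, hk, rfl⟩ := Finset.mem_image.mp hj
    rw [Finset.mem_range] at hk
    have hstep : g (g^[k] x) = g^[k + 1] x := (Function.iterate_succ_apply' g k x).symm
    by_cases hk1 : k + 1 < m
    · rw [hstep]; exact Finset.mem_image.mpr ⟨k + 1, Finset.mem_range.mpr hk1, rfl⟩
    · have : k + 1 = m := by omega
      rw [hstep, this, hx]
      exact Finset.mem_image.mpr ⟨0, Finset.mem_range.mpr hm, rfl⟩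
  have hOnto : ∀ j ∈ O, ∃ j' ∈ O, g j' = j := by
    intro j hj
    rw [hO] at hj
    obtain ⟨k, hk, rfl⟩ := Finset.mem_image.mp hj
    rw [Finset.mem_range] at hk
    by_cases hk0 : k = 0
    · subst hk0
      refine ⟨g^[m - 1] x, ?_, ?_⟩
      · rw [hO]; exact Finset.mem_image.mpr ⟨m - 1, Finset.mem_range.mpr (by omega), rfl⟩
      · have : g (g^[m - 1] x) = g^[m - 1 + 1] x := (Function.iterate_succ_apply' g (m - 1) x).symm
        rw [this]
        have : m - 1 + 1 = m := by omega
        rw [this, hx]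
        simp
    · refine ⟨g^[k - 1] x, ?_, ?_⟩
      · rw [hO]; exact Finset.mem_image.mpr ⟨k - 1, Finset.mem_range.mpr (by omega), rfl⟩
      · have : g (g^[k - 1] x) = g^[k - 1 + 1] x := (Function.iterate_succ_apply' g (k - 1) x).symm
        rw [this]
        congr 1
        omega
  classical
  set g' : I → I := fun j => if j ∈ O then g j else j with hg'
  have hsurj : Function.Surjective g' := by
    intro j
    by_cases hj : j ∈ O
    · obtain ⟨j', hj', hgj'⟩ := hOnto j hj
      exact ⟨j', by rw [hg']; simp only [if_pos hj']; exact hgj'⟩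
    · exact ⟨j, by rw [hg']; simp only [if_neg hj]⟩
  have hbij : Function.Bijective g' := Finite.surjective_iff_bijective.mp hsurj
  set e := Equiv.ofBijective g' hbij with he
  set ν : I → S := fun j => μ (g' j) with hν
  have hmatch : P.IsMatching ν := by
    intro s
    have hset : (Finset.univ.filter fun j => ν j = s) =
        (Finset.univ.filter fun j => μ j = s).image ⇑e.symm := by
      ext j
      simp only [Finset.mem_image, Finset.mem_filter, Finset.mem_univ, true_and]
      constructor
      · intro hj
        exact ⟨e j, hj, e.symm_apply_apply j⟩
      · rintro ⟨c, hc, rfl⟩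
        show μ (g' (e.symm c)) = s
        have : g' (e.symm c) = c := e.apply_symm_apply c
        rw [this]; exact hc
    rw [hset, Finset.card_image_of_injective _ e.symm.injective]
    exact hμ.1 s
  refine hμ.2 ν hmatch ⟨?_, ⟨x, ?_⟩⟩
  · intro j
    rw [hν]
    by_cases hj : j ∈ O
    · simp only [hg', if_pos hj]
      exact le_of_lt (hg j (hOR j hj)).2
    · simp only [hg', if_neg hj]
      exact le_rfl
  · rw [hν]
    simp only [hg', if_pos hOx]
    exact (hg x (hOR x hOx)).2

lemma bestAvailable_eq (P : SchoolChoice I S) (used : S → ℕ) (i : I) (t : S)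
    (ht : used t < P.quota t)
    (hmin : ∀ s, used s < P.quota s → P.rk i t ≤ P.rk i s) :
    P.bestAvailable used i = t := by
  have hne : (Finset.univ.filter fun s => used s < P.quota s).Nonempty :=
    ⟨t, by simp [ht]⟩
  rw [bestAvailable, dif_pos hne]
  have h1 : ∀ hE : ∃ b ∈ (Finset.univ.filter fun s => used s < P.quota s),
      ∀ b' ∈ (Finset.univ.filter fun s => used s < P.quota s), P.rk i b ≤ P.rk i b',
      hE.choose = t := by
    intro hE
    obtain ⟨hmem, hspec⟩ := hE.choose_spec
    apply P.rk_inj i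
    apply le_antisymm
    · exact hspec t (by simp [ht])
    · exact hmin _ (Finset.mem_filter.mp hmem).2
  exact h1 _

lemma sd_run_eq (P : SchoolChoice I S) (μ : I → S) (hμ : P.ParetoEfficient μ) :
    ∀ n (R : Finset I), R.card = n → ∀ f : I → S, (∀ j, j ∉ R → f j = μ j) →
    ∃ l : List I, l.Nodup ∧ l.toFinset = R ∧
      P.sdRun l (fun s => (Finset.univ.filter fun j => μ j = s ∧ j ∉ R).card) f = μ := by
  intro n
  induction n with
  | zero =>
      intro R hcard f hf
      have hRe : R = ∅ := Finset.card_eq_zero.mp hcard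
      subst hRe
      refine ⟨[], List.nodup_nil, rfl, ?_⟩
      show f = μ
      funext j
      exact hf j (Finset.notMem_empty j)
  | succ n ih =>
      intro R hcard f hf
      have hR : R.Nonempty := Finset.card_pos.mp (by omega)
      obtain ⟨i, hiR, hitop⟩ := P.exists_top μ hμ R hR
      set R' := R.erase i with hR'
      have hcard' : R'.card = n := by
        rw [hR', Finset.card_erase_of_mem hiR, hcard]
        omega
      set f' := Function.update f i (μ i) with hf'def
      have hf' : ∀ j, j ∉ R' → f' j = μ j := by
        intro j hj
        by_cases hji : j = i
        · subst hji; rw [hf'def, Function.update_self]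
        · rw [hf'def, Function.update_of_ne hji]
          apply hf
          intro hjR
          exact hj (Finset.mem_erase.mpr ⟨hji, hjR⟩)
      obtain ⟨l', hnd', htf', hrun'⟩ := ih R' hcard' f' hf'
      refine ⟨i :: l', ?_, ?_, ?_⟩
      · refine List.nodup_cons.mpr ⟨?_, hnd'⟩
        intro hmem
        have h1 : i ∈ R' := by rw [← htf']; exact List.mem_toFinset.mpr hmem
        rw [hR', Finset.mem_erase] at h1
        exact h1.1 rfl
      · rw [List.toFinset_cons, htf', hR', Finset.insert_erase hiR]
      · set used : S → ℕ := fun s => (Finset.univ.filter fun j => μ j = s ∧ j ∉ R).card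
          with hused
        have hiu : used (μ i) < P.quota (μ i) := by
          have h1 : (Finset.univ.filter fun j => μ j = μ i ∧ j ∉ R) ⊂
              (Finset.univ.filter fun j => μ j = μ i) := by
            constructor
            · intro j hj
              simp only [Finset.mem_filter, Finset.mem_univ, true_and] at hj ⊢
              exact hj.1
            · intro hsub
              have := hsub (by simp : i ∈ (Finset.univ.filter fun j => μ j = μ i))
              exact (Finset.mem_filter.mp this).2.2 hiR
          exact lt_of_lt_of_le (Finset.card_lt_card h1) (hμ.1 (μ i))
        have hb : P.bestAvailable used i = μ i :=
          P.bestAvailable_eq used i (μ i) hiu (fun s hs => hitop s hs)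
        have hupd : Function.update used (μ i) (used (μ i) + 1) =
            (fun s => (Finset.univ.filter fun j => μ j = s ∧ j ∉ R').card) := by
          funext s
          by_cases hs : s = μ i
          · subst hs
            rw [Function.update_self]
            have hins : (Finset.univ.filter fun j => μ j = μ i ∧ j ∉ R') =
                insert i (Finset.univ.filter fun j => μ j = μ i ∧ j ∉ R) := by
              ext j
              by_cases hji : j = i
              · subst hji
                simp [hR', hiR]
              · simp [hR', Finset.mem_erase, hji]
            rw [hins, Finset.card_insert_of_notMem (fun hc =>
              (Finset.mem_filter.mp hc).2.2 hiR)]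
          · rw [Function.update_of_ne hs]
            show used s = _
            simp only [hused]
            congr 1
            ext j
            by_cases hji : j = i
            · subst hji
              have hms : μ j ≠ s := fun h => hs h.symm
              simp [hms]
            · simp [hR', Finset.mem_erase, hji]
        show P.sdRun (i :: l') used f = μ
        rw [sdRun]
        simp only [hb, hupd]
        exact hrun'

end SchoolChoice

/-- Every Pareto-efficient matching is an outcome of a serial
dictatorship: there is an ordering of all the students whose serial
dictatorship produces exactly `μ`. -/
theorem paretoEfficient_is_serialDictatorship {I S : Type} [Fintype I]
    [Fintype S] [DecidableEq I] [DecidableEq S] (P : SchoolChoice I S)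
    (μ : I → S) (hμ : P.ParetoEfficient μ) :
    ∃ order : List I, order.Nodup ∧ (∀ i : I, i ∈ order) ∧
      P.serialDictatorship order = μ := by
  classical
  obtain ⟨l, hnd, htf, hrun⟩ := P.sd_run_eq μ hμ (Finset.univ : Finset I).card
    Finset.univ rfl (fun _ => P.nullSchool)
    (fun j hj => absurd (Finset.mem_univ j) hj)
  refine ⟨l, hnd, fun i => by rw [← List.mem_toFinset, htf]; exact Finset.mem_univ i, ?_⟩
  rw [SchoolChoice.serialDictatorship]
  have h0 : (fun s => (Finset.univ.filter fun j =>
      μ j = s ∧ j ∉ (Finset.univ : Finset I)).card) = (fun _ : S => 0) := by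
    funext s
    simp
  rw [← h0]
  exact hrun
end
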